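/- Convex combinations of Taylor homotopies are again systems of higher homotopies: let f and f' be two coefficient families with a_i = Σ_{j=1}^r f_{i,j} m_j = Σ_{j=1}^r f'_{i,j} m_j for each i, and let λ ∈ 𝕜. Then for each i, λ·σ_i^f + (1−λ)·σ_i^{f'} equals σ_i^{g} where g_{i,j} = λ f_{i,j} + (1−λ) f'_{i,j}, and the collection with σ_𝟎 = τ, σ_{e_i} = λ·σ_i^f + (1−λ)·σ_i^{f'}, and σ_u = 0 for |u| ≥ 2 is a system of higher homotopies for a₁,…,a_c on the Taylor complex T (it satisfies: τ∘τ = 0; τ∘σ_{e_j} + σ_{e_j}∘τ = a_j·id for each j; and Σ_{b+b'=u} σ_b∘σ_{b'} = 0 for all |u| ≥ 2). -/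

import Mathlib

open MvPolynomial

set_option maxHeartbeats 2000000
set_option synthInstance.maxHeartbeats 1000000

/-- The position `p_{t,S}` of `t` in `S ∪ {t}`: one plus the number of elements of `S`
smaller than `t`. -/
def taylorPos {r : ℕ} (S : Finset (Fin r)) (t : Fin r) : ℕ :=
  (S.filter fun s => s < t).card + 1

variable (𝕜 : Type*) [Field 𝕜] {n r : ℕ}

/-- `m_S`: the lcm of the monomials `m_j = x^{v j}` for `j ∈ S` (equal to `1` when `S = ∅`). -/
noncomputable def taylorLcm (v : Fin r → (Fin n →₀ ℕ)) (S : Finset (Fin r)) :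
    MvPolynomial (Fin n) 𝕜 :=
  monomial (S.sup v) 1

/-- The matrix entry of the Taylor differential: `(-1)^{k-i} m_S / m_{S∖{s}}`
(where `i = p_{s,S}` is the position of `s` in `S` and `k = |S|`). -/
noncomputable def taylorEntry (v : Fin r → (Fin n →₀ ℕ)) (S : Finset (Fin r)) (s : Fin r) :
    MvPolynomial (Fin n) 𝕜 :=
  (-1) ^ (S.card - taylorPos S s) * monomial (S.sup v - (S.erase s).sup v) 1

/-- The matrix entry of the homotopy `σ`:
`(-1)^{k - p_{t,S} - 1} f_t m_t m_S / m_{S ∪ {t}}` (where `k = |S|`); the sign is written as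
`(-1)^{k + p_{t,S} + 1}`, which agrees with `(-1)^{k - p_{t,S} - 1}` since the exponents have
the same parity. -/
noncomputable def htpyEntry (v : Fin r → (Fin n →₀ ℕ)) (f : Fin r → MvPolynomial (Fin n) 𝕜)
    (S : Finset (Fin r)) (t : Fin r) : MvPolynomial (Fin n) 𝕜 :=
  (-1) ^ (S.card + taylorPos S t + 1) *
    (f t * monomial (v t + S.sup v - (insert t S).sup v) 1)

/-- The total module of the Taylor complex: the free `Q`-module with basis
`{ε_S : S ⊆ {1,…,r}}`; the basis element `ε_S` is `Finsupp.single S 1`. -/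
abbrev TaylorModule (n r : ℕ) := Finset (Fin r) →₀ MvPolynomial (Fin n) 𝕜

/-- The Taylor differential `τ` on the total module,
`τ(ε_S) = Σ_{s ∈ S} (-1)^{|S| - p_{s,S}} (m_S / m_{S∖{s}}) ε_{S∖{s}}`. -/
noncomputable def taylorTau (v : Fin r → (Fin n →₀ ℕ)) :
    TaylorModule 𝕜 n r →ₗ[MvPolynomial (Fin n) 𝕜] TaylorModule 𝕜 n r :=
  Finsupp.lsum (MvPolynomial (Fin n) 𝕜) fun S =>
    LinearMap.toSpanSingleton _ _
      (∑ s ∈ S, Finsupp.single (S.erase s) (taylorEntry 𝕜 v S s))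

/-- The homotopy `σ` attached to a coefficient family `f` (with `a = Σ_j f_j m_j`):
`σ(ε_S) = Σ_{t ∉ S} (-1)^{|S| - p_{t,S} - 1} (f_t m_t m_S / m_{S∪{t}}) ε_{S∪{t}}`. -/
noncomputable def taylorHtpy (v : Fin r → (Fin n →₀ ℕ)) (f : Fin r → MvPolynomial (Fin n) 𝕜) :
    TaylorModule 𝕜 n r →ₗ[MvPolynomial (Fin n) 𝕜] TaylorModule 𝕜 n r :=
  Finsupp.lsum (MvPolynomial (Fin n) 𝕜) fun S =>
    LinearMap.toSpanSingleton _ _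
      (∑ t ∈ Sᶜ, Finsupp.single (insert t S) (htpyEntry 𝕜 v f S t))

/-- The collection of maps with `σ_𝟎 = τ`, `σ_{e_i}` a prescribed map `σs i`, and `σ_u = 0`
for `|u| ≥ 2` (indices `u ∈ ℕ^c` are encoded as `Fin c →₀ ℕ`). -/
noncomputable def homotopySystem {𝕜 : Type*} [Field 𝕜] {n r c : ℕ}
    (v : Fin r → (Fin n →₀ ℕ))
    (σs : Fin c →
      (TaylorModule 𝕜 n r →ₗ[MvPolynomial (Fin n) 𝕜] TaylorModule 𝕜 n r))
    (u : Fin c →₀ ℕ) :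
    TaylorModule 𝕜 n r →ₗ[MvPolynomial (Fin n) 𝕜] TaylorModule 𝕜 n r :=
  if u = 0 then taylorTau 𝕜 v
  else ∑ i : Fin c, if u = Finsupp.single i 1 then σs i else 0

/-!
Every entry of `τ` and of `σ^g` is a coefficient times `±x^W`, so each identity between them
reduces to an equality of exponent vectors and a parity count of positions `p_{t,S}`. In `τ∘τ`,
`σ^g∘σ^g` and off the diagonal of `τ∘σ^g + σ^g∘τ`, the terms come in pairs (two indices removed
or added in either order) that cancel; the diagonal terms of `τ∘σ^g + σ^g∘τ` are the `g_t m_t`,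
which add up to `a`. As `σ^g` is linear in `g`, the convex combination is `σ` of the averaged
family, and polarizing `σ^g∘σ^g = 0` gives `σ^g∘σ^h + σ^h∘σ^g = 0`. Since `σ_u = 0` for
`|u| ≥ 2`, these anticommutators and squares are all that the higher relations involve.
-/

open Finset

theorem Finset.sum_sum_eq_zero_of_add_swap_eq_zero {α M : Type*} [AddCommMonoid M]
    (s : Finset α) (t : α → Finset α) (F : α → α → M)
    (hswap : ∀ a ∈ s, ∀ b ∈ t a, b ∈ s ∧ a ∈ t b) (hirrefl : ∀ a ∈ s, a ∉ t a)
    (hF : ∀ a ∈ s, ∀ b ∈ t a, F a b + F b a = 0) :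
    ∑ a ∈ s, ∑ b ∈ t a, F a b = 0 := by
  rw [sum_sigma']
  refine sum_involution (fun x _ => ⟨x.2, x.1⟩) ?_ ?_ ?_ fun _ _ => rfl
  · rintro ⟨a, b⟩ h
    rw [mem_sigma] at h
    exact hF a h.1 b h.2
  · rintro ⟨a, b⟩ h _ hab
    rw [mem_sigma] at h
    obtain rfl : b = a := congrArg Sigma.fst hab
    exact hirrefl b h.1 h.2
  · rintro ⟨a, b⟩ h
    rw [mem_sigma] at h ⊢
    exact hswap a h.1 b h.2

theorem Finset.sum_sum_self_eq_zero_of_add_swap_eq_zero {α M : Type*} [DecidableEq α]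
    [AddCommMonoid M] (s : Finset α) (F : α → α → M) (hdiag : ∀ a ∈ s, F a a = 0)
    (hF : ∀ a ∈ s, ∀ b ∈ s, a ≠ b → F a b + F b a = 0) :
    ∑ a ∈ s, ∑ b ∈ s, F a b = 0 := by
  calc ∑ a ∈ s, ∑ b ∈ s, F a b = ∑ a ∈ s, ∑ b ∈ s.erase a, F a b :=
        sum_congr rfl fun a ha => by rw [← add_sum_erase s _ ha, hdiag a ha, zero_add]
    _ = 0 := sum_sum_eq_zero_of_add_swap_eq_zero _ _ _
        (fun a ha b hb => ⟨mem_of_mem_erase hb, mem_erase.2 ⟨(ne_of_mem_erase hb).symm, ha⟩⟩)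
        (fun a _ => notMem_erase a s)
        (fun a ha b hb => hF a ha b (mem_of_mem_erase hb) (ne_of_mem_erase hb).symm)

theorem Finset.sup_eq_sup_sup_erase {α β : Type*} [DecidableEq α] [SemilatticeSup β] [OrderBot β]
    {f : α → β} {s : Finset α} {a : α} (ha : a ∈ s) : s.sup f = f a ⊔ (s.erase a).sup f := by
  conv_lhs => rw [← insert_erase ha]
  exact sup_insert

section SignedMonomial

variable {R σ : Type*} [CommRing R]

noncomputable def signedMonomial (e : ℕ) (W : σ →₀ ℕ) : MvPolynomial σ R :=
  (-1) ^ e * monomial W 1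

theorem signedMonomial_mul (e e' : ℕ) (W W' : σ →₀ ℕ) :
    (signedMonomial e W * signedMonomial e' W' : MvPolynomial σ R) =
      signedMonomial (e + e') (W + W') := by
  have hW : (monomial (W + W') 1 : MvPolynomial σ R) = monomial W 1 * monomial W' 1 := by
    rw [monomial_mul, one_mul]
  rw [signedMonomial, signedMonomial, signedMonomial, pow_add, hW]
  ring

theorem signedMonomial_add_signedMonomial_eq_zero {e e' : ℕ} {W W' : σ →₀ ℕ} (hW : W = W')
    (he : Odd (e + e')) : (signedMonomial e W + signedMonomial e' W' : MvPolynomial σ R) = 0 := by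
  subst hW
  rw [signedMonomial, signedMonomial, ← add_mul]
  rcases Nat.even_or_odd e with h | h
  · rw [h.neg_one_pow, ((Nat.odd_add'.1 he).2 h).neg_one_pow]
    ring
  · rw [h.neg_one_pow, ((Nat.odd_add.1 he).1 h).neg_one_pow]
    ring

theorem signedMonomial_of_even {e : ℕ} (he : Even e) (W : σ →₀ ℕ) :
    (signedMonomial e W : MvPolynomial σ R) = monomial W 1 := by
  rw [signedMonomial, he.neg_one_pow, one_mul]

end SignedMonomial

section TaylorPos

variable {r : ℕ}

theorem one_le_taylorPos (S : Finset (Fin r)) (t : Fin r) : 1 ≤ taylorPos S t :=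
  Nat.le_add_left 1 _

theorem taylorPos_le_card_add_one (S : Finset (Fin r)) (t : Fin r) :
    taylorPos S t ≤ S.card + 1 :=
  Nat.succ_le_succ (card_filter_le S _)

theorem taylorPos_le_card {S : Finset (Fin r)} {s : Fin r} (hs : s ∈ S) :
    taylorPos S s ≤ S.card := by
  have hsub : S.filter (· < s) ⊆ S.erase s := fun x hx =>
    mem_erase.2 ⟨(mem_filter.1 hx).2.ne, (mem_filter.1 hx).1⟩
  have := card_le_card hsub
  rw [card_erase_of_mem hs] at this
  have := card_pos.2 ⟨s, hs⟩
  unfold taylorPos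
  omega

theorem taylorPos_insert_self (S : Finset (Fin r)) (t : Fin r) :
    taylorPos (insert t S) t = taylorPos S t := by
  rw [taylorPos, taylorPos, filter_insert, if_neg (lt_irrefl t)]

theorem taylorPos_insert {S : Finset (Fin r)} {t s : Fin r} (ht : t ∉ S) :
    taylorPos (insert t S) s = taylorPos S s + if t < s then 1 else 0 := by
  unfold taylorPos
  rw [filter_insert]
  split_ifs with h
  · rw [card_insert_of_notMem fun hx => ht (mem_of_mem_filter _ hx)]
  · rfl

theorem taylorPos_erase_self (S : Finset (Fin r)) (s : Fin r) :
    taylorPos (S.erase s) s = taylorPos S s := by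
  rw [taylorPos, taylorPos, filter_erase, erase_eq_of_notMem]
  exact fun hs => lt_irrefl s (mem_filter.1 hs).2

theorem taylorPos_erase {S : Finset (Fin r)} {s : Fin r} (hs : s ∈ S) (t : Fin r) :
    taylorPos S t = taylorPos (S.erase s) t + if s < t then 1 else 0 := by
  conv_lhs => rw [← insert_erase hs]
  exact taylorPos_insert (notMem_erase s S)

end TaylorPos

section Entries

variable {𝕜} {n r : ℕ} {v : Fin r → (Fin n →₀ ℕ)}
  {g : Fin r → MvPolynomial (Fin n) 𝕜}

theorem taylorEntry_eq_signedMonomial (S : Finset (Fin r)) (s : Fin r) :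
    taylorEntry 𝕜 v S s =
      signedMonomial (S.card - taylorPos S s) (S.sup v - (S.erase s).sup v) :=
  rfl

theorem htpyEntry_eq_mul_signedMonomial (S : Finset (Fin r)) (t : Fin r) :
    htpyEntry 𝕜 v g S t =
      g t * signedMonomial (S.card + taylorPos S t + 1) (v t + S.sup v - (insert t S).sup v) := by
  rw [htpyEntry, signedMonomial]
  ring

theorem taylorEntry_mul_add_swap_eq_zero {S : Finset (Fin r)} {s s' : Fin r} (hs : s ∈ S)
    (hs' : s' ∈ S.erase s) :
    taylorEntry 𝕜 v S s * taylorEntry 𝕜 v (S.erase s) s' +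
      taylorEntry 𝕜 v S s' * taylorEntry 𝕜 v (S.erase s') s = 0 := by
  obtain ⟨hne, hs'S⟩ := mem_erase.1 hs'
  have hss' : s ∈ S.erase s' := mem_erase.2 ⟨hne.symm, hs⟩
  simp only [taylorEntry_eq_signedMonomial, signedMonomial_mul]
  apply signedMonomial_add_signedMonomial_eq_zero
  · have hT : (S.erase s').erase s = (S.erase s).erase s' := erase_right_comm
    have h1 : (S.erase s).sup v = v s' ⊔ ((S.erase s).erase s').sup v := sup_eq_sup_sup_erase hs'
    have h2 : (S.erase s').sup v = v s ⊔ ((S.erase s).erase s').sup v := by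
      rw [sup_eq_sup_sup_erase hss', hT]
    rw [hT, h2, sup_eq_sup_sup_erase hs, h1]
    ext x
    simp only [Finsupp.add_apply, Finsupp.tsub_apply, Finsupp.sup_apply]
    omega
  · have p1 := taylorPos_erase hs s'
    have p2 := taylorPos_erase hs'S s
    have b1 := taylorPos_le_card hs
    have b2 := taylorPos_le_card hs'
    have b3 := taylorPos_le_card hss'
    have c1 := card_erase_of_mem hs
    have c2 := card_erase_of_mem hs'S
    have := one_le_taylorPos S s
    have := one_le_taylorPos S s'
    rw [Nat.odd_iff]
    rcases lt_or_gt_of_ne hne with h | h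
    · rw [if_neg (not_lt_of_gt h)] at p1
      rw [if_pos h] at p2
      omega
    · rw [if_pos h] at p1
      rw [if_neg (not_lt_of_gt h)] at p2
      omega

theorem htpyEntry_mul_taylorEntry_add_swap_eq_zero {S : Finset (Fin r)} {s t : Fin r}
    (hs : s ∈ S) (ht : t ∉ S) :
    htpyEntry 𝕜 v g S t * taylorEntry 𝕜 v (insert t S) s +
      taylorEntry 𝕜 v S s * htpyEntry 𝕜 v g (S.erase s) t = 0 := by
  have hne : t ≠ s := fun h => ht (h ▸ hs)
  simp only [taylorEntry_eq_signedMonomial, htpyEntry_eq_mul_signedMonomial, mul_assoc,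
    mul_left_comm _ (g t), ← mul_add, signedMonomial_mul]
  rw [signedMonomial_add_signedMonomial_eq_zero, mul_zero]
  · rw [erase_insert_of_ne hne, sup_insert, sup_insert, sup_eq_sup_sup_erase hs]
    ext x
    simp only [Finsupp.add_apply, Finsupp.tsub_apply, Finsupp.sup_apply]
    omega
  · have p1 := taylorPos_insert (s := s) ht
    have p2 := taylorPos_erase hs t
    have b1 := taylorPos_le_card hs
    have b2 := taylorPos_le_card (mem_insert_of_mem hs : s ∈ insert t S)
    have c1 := card_insert_of_notMem ht
    have c2 := card_erase_of_mem hs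
    have := one_le_taylorPos S s
    have := one_le_taylorPos S t
    rw [Nat.odd_iff]
    rcases lt_or_gt_of_ne hne with h | h
    · rw [if_pos h] at p1
      rw [if_neg (not_lt_of_gt h)] at p2
      omega
    · rw [if_neg (not_lt_of_gt h)] at p1
      rw [if_pos h] at p2
      omega

theorem htpyEntry_mul_taylorEntry_insert_self {S : Finset (Fin r)} {t : Fin r} (ht : t ∉ S) :
    htpyEntry 𝕜 v g S t * taylorEntry 𝕜 v (insert t S) t = g t * monomial (v t) 1 := by
  rw [taylorEntry_eq_signedMonomial, htpyEntry_eq_mul_signedMonomial, mul_assoc,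
    signedMonomial_mul, signedMonomial_of_even]
  · congr 3
    rw [erase_insert ht, sup_insert]
    ext x
    simp only [Finsupp.add_apply, Finsupp.tsub_apply, Finsupp.sup_apply]
    omega
  · have := taylorPos_insert_self S t
    have := taylorPos_le_card_add_one S t
    have := card_insert_of_notMem ht
    rw [Nat.even_iff]
    omega

theorem taylorEntry_mul_htpyEntry_erase_self {S : Finset (Fin r)} {s : Fin r} (hs : s ∈ S) :
    taylorEntry 𝕜 v S s * htpyEntry 𝕜 v g (S.erase s) s = g s * monomial (v s) 1 := by
  rw [taylorEntry_eq_signedMonomial, htpyEntry_eq_mul_signedMonomial, mul_left_comm,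
    signedMonomial_mul, signedMonomial_of_even]
  · congr 3
    rw [insert_erase hs, sup_eq_sup_sup_erase hs]
    ext x
    simp only [Finsupp.add_apply, Finsupp.tsub_apply, Finsupp.sup_apply]
    omega
  · have := taylorPos_erase_self S s
    have := taylorPos_le_card hs
    have := card_erase_of_mem hs
    have := card_pos.2 ⟨s, hs⟩
    rw [Nat.even_iff]
    omega

theorem htpyEntry_mul_add_swap_eq_zero {S : Finset (Fin r)} {t t' : Fin r} (ht : t ∉ S)
    (ht' : t' ∉ insert t S) :
    htpyEntry 𝕜 v g S t * htpyEntry 𝕜 v g (insert t S) t' +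
      htpyEntry 𝕜 v g S t' * htpyEntry 𝕜 v g (insert t' S) t = 0 := by
  obtain ⟨hne, ht'S⟩ : t' ≠ t ∧ t' ∉ S := by simpa only [mem_insert, not_or] using ht'
  simp only [htpyEntry_eq_mul_signedMonomial, mul_mul_mul_comm (g _), mul_comm (g t') (g t),
    ← mul_add, signedMonomial_mul]
  rw [signedMonomial_add_signedMonomial_eq_zero, mul_zero]
  · rw [insert_comm t' t S]
    simp only [sup_insert]
    ext x
    simp only [Finsupp.add_apply, Finsupp.tsub_apply, Finsupp.sup_apply]
    omega
  · have p1 := taylorPos_insert (s := t') ht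
    have p2 := taylorPos_insert (s := t) ht'S
    have c1 := card_insert_of_notMem ht
    have c2 := card_insert_of_notMem ht'S
    rw [Nat.odd_iff]
    rcases lt_or_gt_of_ne hne with h | h
    · rw [if_neg (not_lt_of_gt h)] at p1
      rw [if_pos h] at p2
      omega
    · rw [if_pos h] at p1
      rw [if_neg (not_lt_of_gt h)] at p2
      omega

end Entries

section Operators

variable {𝕜} {n r : ℕ} (v : Fin r → (Fin n →₀ ℕ))

theorem taylorTau_single (S : Finset (Fin r)) (q : MvPolynomial (Fin n) 𝕜) :
    taylorTau 𝕜 v (Finsupp.single S q) =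
      ∑ s ∈ S, Finsupp.single (S.erase s) (q * taylorEntry 𝕜 v S s) := by
  rw [taylorTau, Finsupp.lsum_single, LinearMap.toSpanSingleton_apply, smul_sum]
  simp only [Finsupp.smul_single, smul_eq_mul]

theorem taylorHtpy_single (g : Fin r → MvPolynomial (Fin n) 𝕜) (S : Finset (Fin r))
    (q : MvPolynomial (Fin n) 𝕜) :
    taylorHtpy 𝕜 v g (Finsupp.single S q) =
      ∑ t ∈ Sᶜ, Finsupp.single (insert t S) (q * htpyEntry 𝕜 v g S t) := by
  rw [taylorHtpy, Finsupp.lsum_single, LinearMap.toSpanSingleton_apply, smul_sum]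
  simp only [Finsupp.smul_single, smul_eq_mul]

theorem taylorTau_comp_taylorTau : taylorTau 𝕜 v ∘ₗ taylorTau 𝕜 v = 0 := by
  refine Finsupp.lhom_ext fun S q => ?_
  simp only [LinearMap.comp_apply, taylorTau_single, map_sum, mul_assoc, LinearMap.zero_apply]
  refine sum_sum_eq_zero_of_add_swap_eq_zero _ _ _ (fun s hs s' hs' => ?_)
    (fun s _ => notMem_erase s S) (fun s hs s' hs' => ?_)
  · exact ⟨mem_of_mem_erase hs', mem_erase.2 ⟨(ne_of_mem_erase hs').symm, hs⟩⟩
  · rw [erase_right_comm, ← Finsupp.single_add, ← mul_add,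
      taylorEntry_mul_add_swap_eq_zero hs hs', mul_zero, Finsupp.single_zero]

theorem taylorHtpy_comp_self (g : Fin r → MvPolynomial (Fin n) 𝕜) :
    taylorHtpy 𝕜 v g ∘ₗ taylorHtpy 𝕜 v g = 0 := by
  refine Finsupp.lhom_ext fun S q => ?_
  simp only [LinearMap.comp_apply, taylorHtpy_single, map_sum, mul_assoc, LinearMap.zero_apply]
  refine sum_sum_eq_zero_of_add_swap_eq_zero _ _ _ (fun t ht t' ht' => ?_)
    (fun t _ => by simp) (fun t ht t' ht' => ?_)
  · simp only [mem_compl, mem_insert, not_or] at ht ht' ⊢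
    exact ⟨ht'.2, Ne.symm ht'.1, ht⟩
  · rw [mem_compl] at ht ht'
    rw [insert_comm t' t S, ← Finsupp.single_add, ← mul_add,
      htpyEntry_mul_add_swap_eq_zero ht ht', mul_zero, Finsupp.single_zero]

theorem smul_taylorHtpy_add_smul_taylorHtpy (f f' : Fin r → MvPolynomial (Fin n) 𝕜)
    (c c' : MvPolynomial (Fin n) 𝕜) :
    c • taylorHtpy 𝕜 v f + c' • taylorHtpy 𝕜 v f' =
      taylorHtpy 𝕜 v (fun j => c * f j + c' * f' j) := by
  refine Finsupp.lhom_ext fun S q => ?_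
  simp only [LinearMap.add_apply, LinearMap.smul_apply, taylorHtpy_single, smul_sum,
    ← sum_add_distrib, Finsupp.smul_single, smul_eq_mul, ← Finsupp.single_add]
  refine sum_congr rfl fun t _ => congrArg _ ?_
  simp only [htpyEntry]
  ring

theorem taylorHtpy_comp_add_comp (g h : Fin r → MvPolynomial (Fin n) 𝕜) :
    taylorHtpy 𝕜 v g ∘ₗ taylorHtpy 𝕜 v h + taylorHtpy 𝕜 v h ∘ₗ taylorHtpy 𝕜 v g = 0 := by
  have hadd :
      taylorHtpy 𝕜 v (fun j => g j + h j) = taylorHtpy 𝕜 v g + taylorHtpy 𝕜 v h := by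
    simpa only [one_smul, one_mul] using (smul_taylorHtpy_add_smul_taylorHtpy v g h 1 1).symm
  have hsq := taylorHtpy_comp_self v fun j => g j + h j
  rwa [hadd, LinearMap.add_comp, LinearMap.comp_add, LinearMap.comp_add, taylorHtpy_comp_self,
    taylorHtpy_comp_self, zero_add, add_zero] at hsq

end Operators

section Homotopy

variable {𝕜} {n r : ℕ} (v : Fin r → (Fin n →₀ ℕ))
  (g : Fin r → MvPolynomial (Fin n) 𝕜)

theorem taylorTau_taylorHtpy_single (S : Finset (Fin r)) (q : MvPolynomial (Fin n) 𝕜) :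
    taylorTau 𝕜 v (taylorHtpy 𝕜 v g (Finsupp.single S q)) =
      Finsupp.single S (q * ∑ t ∈ Sᶜ, g t * monomial (v t) 1) +
        ∑ t ∈ Sᶜ, ∑ s ∈ S, Finsupp.single (insert t (S.erase s))
          (q * (htpyEntry 𝕜 v g S t * taylorEntry 𝕜 v (insert t S) s)) := by
  have hsplit : ∀ t ∈ Sᶜ,
      ∑ s ∈ insert t S, Finsupp.single ((insert t S).erase s)
          (q * (htpyEntry 𝕜 v g S t * taylorEntry 𝕜 v (insert t S) s)) =
        Finsupp.single S (q * (g t * monomial (v t) 1)) +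
          ∑ s ∈ S, Finsupp.single (insert t (S.erase s))
            (q * (htpyEntry 𝕜 v g S t * taylorEntry 𝕜 v (insert t S) s)) := by
    intro t ht
    rw [mem_compl] at ht
    rw [sum_insert ht, erase_insert ht, htpyEntry_mul_taylorEntry_insert_self ht]
    refine congrArg _ (sum_congr rfl fun s hs => ?_)
    rw [erase_insert_of_ne fun h : t = s => ht (h ▸ hs)]
  simp only [taylorHtpy_single, map_sum, taylorTau_single, mul_assoc]
  rw [sum_congr rfl hsplit, sum_add_distrib, mul_sum, Finsupp.single_finsetSum]

theorem taylorHtpy_taylorTau_single (S : Finset (Fin r)) (q : MvPolynomial (Fin n) 𝕜) :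
    taylorHtpy 𝕜 v g (taylorTau 𝕜 v (Finsupp.single S q)) =
      Finsupp.single S (q * ∑ s ∈ S, g s * monomial (v s) 1) +
        ∑ s ∈ S, ∑ t ∈ Sᶜ, Finsupp.single (insert t (S.erase s))
          (q * (taylorEntry 𝕜 v S s * htpyEntry 𝕜 v g (S.erase s) t)) := by
  have hsplit : ∀ s ∈ S,
      ∑ t ∈ (S.erase s)ᶜ, Finsupp.single (insert t (S.erase s))
          (q * (taylorEntry 𝕜 v S s * htpyEntry 𝕜 v g (S.erase s) t)) =
        Finsupp.single S (q * (g s * monomial (v s) 1)) +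
          ∑ t ∈ Sᶜ, Finsupp.single (insert t (S.erase s))
            (q * (taylorEntry 𝕜 v S s * htpyEntry 𝕜 v g (S.erase s) t)) := by
    intro s hs
    have hcompl : (S.erase s)ᶜ = insert s Sᶜ := by
      ext x
      simp only [mem_compl, mem_erase, mem_insert]
      tauto
    rw [hcompl, sum_insert (by simpa using hs), insert_erase hs,
      taylorEntry_mul_htpyEntry_erase_self hs]
  simp only [taylorTau_single, map_sum, taylorHtpy_single, mul_assoc]
  rw [sum_congr rfl hsplit, sum_add_distrib, mul_sum, Finsupp.single_finsetSum]

theorem taylorTau_comp_taylorHtpy_add_taylorHtpy_comp_taylorTau :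
    taylorTau 𝕜 v ∘ₗ taylorHtpy 𝕜 v g + taylorHtpy 𝕜 v g ∘ₗ taylorTau 𝕜 v =
      (∑ j, g j * monomial (v j) 1) • LinearMap.id := by
  refine Finsupp.lhom_ext fun S q => ?_
  have hcross :
      ∑ t ∈ Sᶜ, ∑ s ∈ S, Finsupp.single (insert t (S.erase s))
          (q * (htpyEntry 𝕜 v g S t * taylorEntry 𝕜 v (insert t S) s)) +
        ∑ s ∈ S, ∑ t ∈ Sᶜ, Finsupp.single (insert t (S.erase s))
          (q * (taylorEntry 𝕜 v S s * htpyEntry 𝕜 v g (S.erase s) t)) = 0 := by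
    rw [sum_comm (s := S), ← sum_add_distrib]
    refine sum_eq_zero fun t ht => ?_
    rw [← sum_add_distrib]
    refine sum_eq_zero fun s hs => ?_
    rw [← Finsupp.single_add, ← mul_add,
      htpyEntry_mul_taylorEntry_add_swap_eq_zero hs (mem_compl.1 ht), mul_zero,
      Finsupp.single_zero]
  rw [LinearMap.add_apply, LinearMap.comp_apply, LinearMap.comp_apply,
    taylorTau_taylorHtpy_single, taylorHtpy_taylorTau_single, add_add_add_comm, hcross,
    add_zero, ← Finsupp.single_add, ← mul_add, sum_compl_add_sum, LinearMap.smul_apply,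
    LinearMap.id_apply, Finsupp.smul_single, smul_eq_mul, mul_comm]

end Homotopy

section OnUnitVectors

variable {ι A : Type*} [Fintype ι] [DecidableEq ι]

noncomputable def onUnitVectors [AddCommMonoid A] (m : ι → A) (w : ι →₀ ℕ) : A :=
  ∑ i, if w = Finsupp.single i 1 then m i else 0

theorem onUnitVectors_eq_zero [AddCommMonoid A] (m : ι → A) {u : ι →₀ ℕ}
    (hu : (u.sum fun _ x => x) ≠ 1) : onUnitVectors m u = 0 :=
  sum_eq_zero fun i _ => if_neg fun h => hu (by simp [h])

theorem sum_antidiagonal_onUnitVectors_mul [Semiring A] (m : ι → A) (u : ι →₀ ℕ) :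
    ∑ p ∈ HasAntidiagonal.antidiagonal u, onUnitVectors m p.1 * onUnitVectors m p.2 =
      ∑ i, ∑ j, if Finsupp.single i 1 + Finsupp.single j 1 = u then m i * m j else 0 := by
  simp only [onUnitVectors, sum_mul_sum, ite_zero_mul_ite_zero]
  rw [sum_comm]
  refine sum_congr rfl fun i _ => ?_
  rw [sum_comm]
  refine sum_congr rfl fun j _ => ?_
  have hpair : ∀ p : (ι →₀ ℕ) × (ι →₀ ℕ),
      (p.1 = Finsupp.single i 1 ∧ p.2 = Finsupp.single j 1) ↔
        p = (Finsupp.single i 1, Finsupp.single j 1) := by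
    simp [Prod.ext_iff]
  simp_rw [hpair]
  rw [sum_ite_eq']
  simp only [HasAntidiagonal.mem_antidiagonal]

end OnUnitVectors

section HomotopySystem

variable {𝕜} {n r c : ℕ} (v : Fin r → (Fin n →₀ ℕ))
  (σs : Fin c → Module.End (MvPolynomial (Fin n) 𝕜) (TaylorModule 𝕜 n r))

theorem homotopySystem_of_ne_zero {u : Fin c →₀ ℕ} (hu : u ≠ 0) :
    homotopySystem v σs u = onUnitVectors σs u :=
  if_neg hu

theorem homotopySystem_comp_homotopySystem_of_mem_antidiagonal {u : Fin c →₀ ℕ}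
    (hu : 2 ≤ u.sum fun _ x => x) {p : (Fin c →₀ ℕ) × (Fin c →₀ ℕ)}
    (hp : p ∈ HasAntidiagonal.antidiagonal u) :
    homotopySystem v σs p.1 ∘ₗ homotopySystem v σs p.2 =
      onUnitVectors σs p.1 * onUnitVectors σs p.2 := by
  obtain ⟨p₁, p₂⟩ := p
  rw [HasAntidiagonal.mem_antidiagonal] at hp
  dsimp only at hp ⊢
  have hu0 : u ≠ 0 := by
    rintro rfl
    simp at hu
  have hHu : homotopySystem v σs u = 0 := by
    rw [homotopySystem_of_ne_zero v σs hu0, onUnitVectors_eq_zero σs (by omega)]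
  rcases eq_or_ne p₁ 0 with rfl | h₁
  · rw [zero_add] at hp
    rw [hp, hHu, onUnitVectors_eq_zero σs (u := 0) (by simp), zero_mul, LinearMap.comp_zero]
  rcases eq_or_ne p₂ 0 with rfl | h₂
  · rw [add_zero] at hp
    rw [hp, hHu, onUnitVectors_eq_zero σs (by omega), zero_mul, LinearMap.zero_comp]
  rw [homotopySystem_of_ne_zero v σs h₁, homotopySystem_of_ne_zero v σs h₂]
  rfl

theorem sum_antidiagonal_homotopySystem_comp_eq_zero
    (hanti : ∀ i j, σs i ∘ₗ σs j + σs j ∘ₗ σs i = 0) (hsq : ∀ i, σs i ∘ₗ σs i = 0)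
    {u : Fin c →₀ ℕ} (hu : 2 ≤ u.sum fun _ x => x) :
    ∑ p ∈ HasAntidiagonal.antidiagonal u,
      homotopySystem v σs p.1 ∘ₗ homotopySystem v σs p.2 = 0 := by
  rw [sum_congr rfl fun p hp => homotopySystem_comp_homotopySystem_of_mem_antidiagonal v σs hu hp,
    sum_antidiagonal_onUnitVectors_mul]
  refine sum_sum_self_eq_zero_of_add_swap_eq_zero _ _ (fun i _ => ?_) (fun i _ j _ _ => ?_)
  · rw [Module.End.mul_eq_comp, hsq, ite_self]
  · rw [add_comm (Finsupp.single j 1)]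
    split_ifs
    · exact hanti i j
    · exact add_zero 0

end HomotopySystem

/-- Convex combinations of Taylor homotopies are again systems of higher
homotopies: if `a_i = Σ_j f_{i,j} m_j = Σ_j f'_{i,j} m_j` and `λ ∈ 𝕜`, then for each `i` the
map `λ·σᶠᵢ + (1−λ)·σᶠ'ᵢ` equals `σᵍᵢ` where `g_{i,j} = λ f_{i,j} + (1−λ) f'_{i,j}`, and the
collection with `σ_𝟎 = τ`, `σ_{e_i} = λ·σᶠᵢ + (1−λ)·σᶠ'ᵢ`, and `σ_u = 0` for `|u| ≥ 2` is a
system of higher homotopies for `a₁,…,a_c` on the Taylor complex: `τ∘τ = 0`,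
`τ∘σ_{e_j} + σ_{e_j}∘τ = a_j · id` for each `j`, and `Σ_{b+b'=u} σ_b∘σ_{b'} = 0` for
`|u| ≥ 2`. Here `m_j = x^{v j}`. -/
theorem convex_combination_of_homotopies {𝕜 : Type*} [Field 𝕜] {n r c : ℕ}
    (v : Fin r → (Fin n →₀ ℕ)) (a : Fin c → MvPolynomial (Fin n) 𝕜)
    (f f' : Fin c → Fin r → MvPolynomial (Fin n) 𝕜)
    (ha : ∀ i, a i = ∑ j : Fin r, f i j * monomial (v j) 1)
    (ha' : ∀ i, a i = ∑ j : Fin r, f' i j * monomial (v j) 1)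
    (lam : 𝕜) :
    (∀ i : Fin c,
      (C lam : MvPolynomial (Fin n) 𝕜) • taylorHtpy 𝕜 v (f i) + (C (1 - lam) : MvPolynomial (Fin n) 𝕜) • taylorHtpy 𝕜 v (f' i) =
        taylorHtpy 𝕜 v (fun j => C lam * f i j + C (1 - lam) * f' i j)) ∧
    (taylorTau 𝕜 v ∘ₗ taylorTau 𝕜 v = 0) ∧
    (∀ j : Fin c,
      taylorTau 𝕜 v ∘ₗ
          ((C lam : MvPolynomial (Fin n) 𝕜) • taylorHtpy 𝕜 v (f j) +
            (C (1 - lam) : MvPolynomial (Fin n) 𝕜) • taylorHtpy 𝕜 v (f' j)) +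
        ((C lam : MvPolynomial (Fin n) 𝕜) • taylorHtpy 𝕜 v (f j) +
            (C (1 - lam) : MvPolynomial (Fin n) 𝕜) • taylorHtpy 𝕜 v (f' j)) ∘ₗ
          taylorTau 𝕜 v =
        a j • LinearMap.id) ∧
    (∀ u : Fin c →₀ ℕ, 2 ≤ u.sum (fun _ x => x) →
      ∑ p ∈ Finset.HasAntidiagonal.antidiagonal u,
        homotopySystem (𝕜 := 𝕜) v
            (fun i => (C lam : MvPolynomial (Fin n) 𝕜) • taylorHtpy 𝕜 v (f i) + (C (1 - lam) : MvPolynomial (Fin n) 𝕜) • taylorHtpy 𝕜 v (f' i))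
            p.1 ∘ₗ
          homotopySystem (𝕜 := 𝕜) v
            (fun i => (C lam : MvPolynomial (Fin n) 𝕜) • taylorHtpy 𝕜 v (f i) + (C (1 - lam) : MvPolynomial (Fin n) 𝕜) • taylorHtpy 𝕜 v (f' i))
            p.2 = 0) := by
  have hconv : ∀ i, (C lam : MvPolynomial (Fin n) 𝕜) • taylorHtpy 𝕜 v (f i) +
      (C (1 - lam) : MvPolynomial (Fin n) 𝕜) • taylorHtpy 𝕜 v (f' i) =
        taylorHtpy 𝕜 v (fun j => C lam * f i j + C (1 - lam) * f' i j) :=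
    fun i => smul_taylorHtpy_add_smul_taylorHtpy v (f i) (f' i) _ _
  have hcoeff : ∀ i, ∑ j, (C lam * f i j + C (1 - lam) * f' i j) * monomial (v j) 1 = a i := by
    intro i
    calc ∑ j, (C lam * f i j + C (1 - lam) * f' i j) * monomial (v j) 1
        = C lam * ∑ j, f i j * monomial (v j) 1 +
            C (1 - lam) * ∑ j, f' i j * monomial (v j) 1 := by
          simp only [mul_sum, ← sum_add_distrib, add_mul, mul_assoc]
      _ = a i := by rw [← ha i, ← ha' i, ← add_mul, ← C_add, add_sub_cancel, C_1, one_mul]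
  refine ⟨hconv, taylorTau_comp_taylorTau v, fun j => ?_, fun u hu => ?_⟩
  · rw [hconv j, taylorTau_comp_taylorHtpy_add_taylorHtpy_comp_taylorTau, hcoeff]
  · refine sum_antidiagonal_homotopySystem_comp_eq_zero v _ (fun i j => ?_) (fun i => ?_) hu
    · rw [hconv, hconv]
      exact taylorHtpy_comp_add_comp v _ _
    · rw [hconv]
      exact taylorHtpy_comp_self v _
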